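/- arXiv:2512.16961 — 5 statements merged into one kernel-verified Lean document; each statement's English description precedes it below -/
import Mathlib

section
/- Let n ≥ 1, let α₁ < α₂ < ... < αₙ be nonnegative integers and x₁,...,xₙ be positive integers. Then the sequence consisting of x₁ copies of α₁, x₂ copies of α₂, ..., xₙ copies of αₙ (in non-decreasing order, with m = x₁+...+xₙ terms) satisfies Landau's condition (∑_{i=1}^k s_i ≥ k(k-1)/2 for all 1 ≤ k ≤ m, with equality at k = m) if and only if for every 1 ≤ k ≤ n, ∑_{i=1}^k αᵢ·xᵢ ≥ (∑_{i=1}^k xᵢ)(∑_{i=1}^k xᵢ − 1)/2, with equality when k = n. -/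
open Finset

private lemma gauss_interp (a k b c A : ℕ) (hak : a ≤ k) (hkb : k ≤ b)
    (h1 : ∑ j ∈ range a, j ≤ A)
    (h2 : ∑ j ∈ range b, j ≤ A + (b - a) * c) :
    ∑ j ∈ range k, j ≤ A + (k - a) * c := by
  by_cases h : k ≤ c + 1
  · have hsplit : (∑ j ∈ range a, j) + ∑ j ∈ Ico a k, j = ∑ j ∈ range k, j := by
      simp only [range_eq_Ico]
      exact Finset.sum_Ico_consecutive _ (Nat.zero_le _) hak
    have hb : ∑ j ∈ Ico a k, j ≤ (k - a) * c := by
      calc ∑ j ∈ Ico a k, j ≤ ∑ _j ∈ Ico a k, c :=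
              Finset.sum_le_sum (fun j hj => by
                have := (Finset.mem_Ico.mp hj).2; omega)
        _ = (k - a) * c := by rw [Finset.sum_const, Nat.card_Ico, smul_eq_mul]
    omega
  · have hck : c ≤ k := by omega
    have hsplit : (∑ j ∈ range k, j) + ∑ j ∈ Ico k b, j = ∑ j ∈ range b, j := by
      simp only [range_eq_Ico]
      exact Finset.sum_Ico_consecutive _ (Nat.zero_le _) hkb
    have hb : (b - k) * c ≤ ∑ j ∈ Ico k b, j := by
      calc (b - k) * c = ∑ _j ∈ Ico k b, c := by
              rw [Finset.sum_const, Nat.card_Ico, smul_eq_mul]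
        _ ≤ ∑ j ∈ Ico k b, j :=
              Finset.sum_le_sum (fun j hj => by
                have := (Finset.mem_Ico.mp hj).1; omega)
    have hmul : (b - a) * c = (k - a) * c + (b - k) * c := by
      rw [← add_mul]; congr 1; omega
    omega

/-- Landau's condition at prefix block boundaries suffices:
the expanded sequence (x_i copies of α_i) satisfies Landau's condition iff
the block inequalities hold with equality at k = n. -/
theorem stmt_0 (n : ℕ) (hn : 1 ≤ n) (α x : ℕ → ℕ)
    (hα : ∀ i ∈ Finset.Icc 1 n, ∀ j ∈ Finset.Icc 1 n, i < j → α i < α j)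
    (hx : ∀ i ∈ Finset.Icc 1 n, 1 ≤ x i)
    (p : ℕ → ℕ) (hp : ∀ k, p k = ∑ i ∈ Finset.Icc 1 k, x i)
    (m : ℕ) (hm : m = p n)
    (s : ℕ → ℕ)
    (hs : ∀ i ∈ Finset.Icc 1 n, ∀ j, p (i - 1) < j → j ≤ p i → s j = α i) :
    ((∀ k ∈ Finset.Icc 1 m, (∑ j ∈ Finset.Icc 1 k, s j) ≥ k * (k - 1) / 2) ∧
      (∑ j ∈ Finset.Icc 1 m, s j) = m * (m - 1) / 2) ↔
    ((∀ k ∈ Finset.Icc 1 n,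
        (∑ i ∈ Finset.Icc 1 k, α i * x i) ≥ p k * (p k - 1) / 2) ∧
      (∑ i ∈ Finset.Icc 1 n, α i * x i) = p n * (p n - 1) / 2) := by
  have hp0 : p 0 = 0 := by rw [hp]; simp
  have pmono : ∀ a b : ℕ, a ≤ b → p a ≤ p b := by
    intro a b hab
    rw [hp, hp]
    exact Finset.sum_le_sum_of_subset (Finset.Icc_subset_Icc_right hab)
  have hpsucc : ∀ ℓ : ℕ, p (ℓ + 1) = p ℓ + x (ℓ + 1) := by
    intro ℓ
    rw [hp, hp, Finset.sum_Icc_succ_top (by omega)]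
  -- partial block sum
  have L3 : ∀ i ∈ Finset.Icc 1 n, ∀ k, p (i - 1) ≤ k → k ≤ p i →
      ∑ j ∈ Finset.Icc 1 k, s j
        = (∑ j ∈ Finset.Icc 1 (p (i - 1)), s j) + (k - p (i - 1)) * α i := by
    intro i hi k h1 h2
    have hsplit : (∑ j ∈ Finset.Ioc 0 (p (i-1)), s j) + ∑ j ∈ Finset.Ioc (p (i-1)) k, s j
        = ∑ j ∈ Finset.Ioc 0 k, s j :=
      Finset.sum_Ioc_consecutive _ (Nat.zero_le _) h1
    have hIcc : ∀ t : ℕ, Finset.Icc 1 t = Finset.Ioc 0 t := fun t => rfl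
    rw [hIcc, hIcc, ← hsplit]
    congr 1
    calc ∑ j ∈ Finset.Ioc (p (i-1)) k, s j
        = ∑ _j ∈ Finset.Ioc (p (i-1)) k, α i :=
          Finset.sum_congr rfl (fun j hj => by
            have hj' := Finset.mem_Ioc.mp hj
            exact hs i hi j hj'.1 (le_trans hj'.2 h2))
      _ = (k - p (i - 1)) * α i := by
          rw [Finset.sum_const, Nat.card_Ioc, smul_eq_mul]
  -- block sums
  have L2 : ∀ ℓ, ℓ ≤ n →
      ∑ j ∈ Finset.Icc 1 (p ℓ), s j = ∑ i ∈ Finset.Icc 1 ℓ, α i * x i := by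
    intro ℓ
    induction ℓ with
    | zero => intro _; rw [hp0]; simp
    | succ t ih =>
      intro ht
      have hmem : t + 1 ∈ Finset.Icc 1 n := Finset.mem_Icc.mpr ⟨by omega, ht⟩
      have := L3 (t + 1) hmem (p (t + 1)) (by
          have : (t + 1) - 1 = t := by omega
          rw [this]; exact pmono t (t+1) (by omega)) le_rfl
      simp only [Nat.add_sub_cancel] at this
      rw [this, ih (by omega), Finset.sum_Icc_succ_top (by omega : 1 ≤ t + 1),
        hpsucc t, Nat.add_sub_cancel_left, mul_comm]
  -- block existence
  have L4 : ∀ k, 1 ≤ k → k ≤ p n → ∃ i ∈ Finset.Icc 1 n, p (i - 1) < k ∧ k ≤ p i := by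
    have : ∀ ℓ, ∀ k, 1 ≤ k → k ≤ p ℓ → ∃ i ∈ Finset.Icc 1 ℓ, p (i - 1) < k ∧ k ≤ p i := by
      intro ℓ
      induction ℓ with
      | zero => intro k hk1 hk2; rw [hp0] at hk2; omega
      | succ t ih =>
        intro k hk1 hk2
        by_cases hc : k ≤ p t
        · obtain ⟨i, hi, h⟩ := ih k hk1 hc
          exact ⟨i, Finset.mem_Icc.mpr ⟨(Finset.mem_Icc.mp hi).1,
            le_trans (Finset.mem_Icc.mp hi).2 (by omega)⟩, h⟩
        · exact ⟨t + 1, Finset.mem_Icc.mpr ⟨by omega, le_rfl⟩,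
            by simpa using ⟨by omega, hk2⟩⟩
    intro k hk1 hk2
    obtain ⟨i, hi, h⟩ := this n k hk1 hk2
    exact ⟨i, hi, h⟩
  have hgauss : ∀ t : ℕ, t * (t - 1) / 2 = ∑ j ∈ range t, j :=
    fun t => (Finset.sum_range_id t).symm
  have hp1 : ∀ k, 1 ≤ k → 1 ≤ p k := by
    intro k hk
    rw [hp]
    calc 1 ≤ x 1 := hx 1 (Finset.mem_Icc.mpr ⟨le_rfl, hn⟩)
      _ ≤ ∑ i ∈ Finset.Icc 1 k, x i :=
        Finset.single_le_sum (fun i _ => Nat.zero_le _)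
          (Finset.mem_Icc.mpr ⟨le_rfl, hk⟩)
  constructor
  · rintro ⟨H, He⟩
    refine ⟨fun k hk => ?_, ?_⟩
    · obtain ⟨hk1, hk2⟩ := Finset.mem_Icc.mp hk
      have hmem : p k ∈ Finset.Icc 1 m :=
        Finset.mem_Icc.mpr ⟨hp1 k hk1, hm ▸ pmono k n hk2⟩
      have := H (p k) hmem
      rwa [L2 k hk2] at this
    · rw [← L2 n le_rfl, ← hm]; exact He
  · rintro ⟨H, He⟩
    constructor
    · intro k hk
      obtain ⟨hk1, hk2⟩ := Finset.mem_Icc.mp hk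
      obtain ⟨i, hi, hik1, hik2⟩ := L4 k hk1 (hm ▸ hk2)
      obtain ⟨hi1, hi2⟩ := Finset.mem_Icc.mp hi
      have hTa : ∑ j ∈ Finset.Icc 1 (p (i-1)), s j
          = ∑ j ∈ Finset.Icc 1 (i-1), α j * x j := L2 (i-1) (by omega)
      have h1 : ∑ j ∈ range (p (i-1)), j ≤ ∑ j ∈ Finset.Icc 1 (p (i-1)), s j := by
        rcases Nat.eq_zero_or_pos (i - 1) with h0 | hpos
        · rw [h0, hp0]; simp
        · have := H (i-1) (Finset.mem_Icc.mpr ⟨hpos, by omega⟩)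
          rw [hgauss] at this; rwa [hTa]
      have h2 : ∑ j ∈ range (p i), j
          ≤ (∑ j ∈ Finset.Icc 1 (p (i-1)), s j) + (p i - p (i-1)) * α i := by
        have hb := H i hi
        rw [hgauss] at hb
        have hTb := L3 i hi (p i) (pmono (i-1) i (by omega)) le_rfl
        rw [← hTb]
        have := L2 i hi2
        omega
      have key := gauss_interp (p (i-1)) k (p i) (α i)
        (∑ j ∈ Finset.Icc 1 (p (i-1)), s j) (le_of_lt hik1) hik2 h1 h2
      rw [ge_iff_le, hgauss, L3 i hi k (le_of_lt hik1) hik2]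
      exact key
    · rw [← L2 n le_rfl] at He; rw [hm]; exact He
end

section
/- Let n ≥ 2, let α₁ < ... < αₙ be nonnegative integers and x₁,...,xₙ positive integers such that ∑_{i=1}^k αᵢxᵢ ≥ p_k(p_k−1)/2 for all 1 ≤ k ≤ n with equality at k = n, where p_k = ∑_{i=1}^k xᵢ. Then (2αₙ + 1)² − 8·∑_{i=1}^{n−1}(αₙ − αᵢ)xᵢ is a perfect square of an odd positive integer. -/
/-- For a valid score sequence, (2αₙ+1)² − 8∑_{i<n}(αₙ−αᵢ)xᵢ is the square of an
odd positive integer. -/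
theorem stmt_5 (n : ℕ) (hn : 2 ≤ n) (α x : ℕ → ℕ)
    (hα : ∀ i ∈ Finset.Icc 1 n, ∀ j ∈ Finset.Icc 1 n, i < j → α i < α j)
    (hx : ∀ i ∈ Finset.Icc 1 n, 1 ≤ x i)
    (p : ℕ → ℕ) (hp : ∀ k, p k = ∑ i ∈ Finset.Icc 1 k, x i)
    (hL : ∀ k ∈ Finset.Icc 1 n,
      (∑ i ∈ Finset.Icc 1 k, α i * x i) ≥ p k * (p k - 1) / 2)
    (hEq : (∑ i ∈ Finset.Icc 1 n, α i * x i) = p n * (p n - 1) / 2) :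
    ∃ β : ℕ, Odd β ∧ 0 < β ∧
      (β : ℤ) ^ 2 = (2 * (α n : ℤ) + 1) ^ 2
        - 8 * ∑ i ∈ Finset.Icc 1 (n - 1), ((α n : ℤ) - α i) * x i := by
  -- abbreviations
  set S : ℤ := ∑ i ∈ Finset.Icc 1 (n - 1), (x i : ℤ) with hS
  set Q : ℤ := ∑ i ∈ Finset.Icc 1 (n - 1), (α i : ℤ) * (x i : ℤ) with hQ
  have hn1 : n - 1 + 1 = n := Nat.succ_pred_eq_of_pos (show 0 < n by omega)
  have hxn : 1 ≤ x n := hx n (Finset.mem_Icc.mpr ⟨by omega, le_refl n⟩)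
  have hpn : 1 ≤ p n := by
    rw [hp n]
    calc 1 ≤ x n := hxn
    _ ≤ _ := Finset.single_le_sum (f := x) (fun i _ => Nat.zero_le _)
        (by simp [Finset.mem_Icc]; omega)
  -- p n * (p n - 1) is even
  have heven : 2 ∣ p n * (p n - 1) := by
    rcases Nat.even_or_odd (p n) with h | h
    · exact Dvd.dvd.mul_right h.two_dvd _
    · exact Dvd.dvd.mul_left (Nat.Odd.sub_odd h odd_one).two_dvd _
  have hEq2 : 2 * (∑ i ∈ Finset.Icc 1 n, α i * x i) = p n * (p n - 1) := by
    rw [hEq, Nat.mul_div_cancel' heven]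
  -- split top term of sums
  have hsplitx : (p n : ℤ) = S + (x n : ℤ) := by
    rw [hp n, ← hn1, Finset.sum_Icc_succ_top (by omega), hn1]
    push_cast
    rfl
  have hsplita : (∑ i ∈ Finset.Icc 1 n, (α i : ℤ) * (x i : ℤ))
      = Q + (α n : ℤ) * (x n : ℤ) := by
    rw [← hn1, Finset.sum_Icc_succ_top (by omega), hn1]
  -- cast the key relation to ℤ
  have hrel : 2 * (Q + (α n : ℤ) * x n) = (S + x n) * (S + x n - 1) := by
    have := congrArg (Nat.cast : ℕ → ℤ) hEq2
    push_cast [Nat.cast_sub hpn] at this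
    rw [hsplita] at this
    rw [this, hsplitx]
  -- the witness
  refine ⟨(2 * (x n : ℤ) + 2 * S - 2 * (α n : ℤ) - 1).natAbs, ?_, ?_, ?_⟩
  · rw [Int.natAbs_odd]
    exact ⟨(x n : ℤ) + S - (α n : ℤ) - 1, by ring⟩
  · rcases Nat.even_or_odd ((2 * (x n : ℤ) + 2 * S - 2 * (α n : ℤ) - 1).natAbs) with h | h
    · exfalso
      have : Odd (2 * (x n : ℤ) + 2 * S - 2 * (α n : ℤ) - 1).natAbs := by
        rw [Int.natAbs_odd]; exact ⟨(x n : ℤ) + S - (α n : ℤ) - 1, by ring⟩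
      exact (Nat.not_even_iff_odd.mpr this) h
    · exact h.pos
  · have habs : ((2 * (x n : ℤ) + 2 * S - 2 * (α n : ℤ) - 1).natAbs : ℤ) ^ 2
        = (2 * (x n : ℤ) + 2 * S - 2 * (α n : ℤ) - 1) ^ 2 := by
      rw [sq, sq, Int.natAbs_mul_self']
    rw [habs]
    have hT : ∑ i ∈ Finset.Icc 1 (n - 1), ((α n : ℤ) - α i) * x i
        = (α n : ℤ) * S - Q := by
      rw [hS, hQ, Finset.mul_sum, ← Finset.sum_sub_distrib]
      exact Finset.sum_congr rfl fun i _ => by ring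
    rw [hT]
    linear_combination -4 * hrel
end

section
/- Let A ≥ 0 be an integer and let S be a nonnegative integer such that (2A+1)² − 8S = β² for some odd nonnegative integer β ≤ 2A+1. Then there exists a natural number f with f ≤ (2A+1)/2 and (2A+1−2f)·f = S. -/
/-- If (2A+1)² − 8S is the square of an odd β ≤ 2A+1, then S = (2A+1−2f)f for
some natural f ≤ (2A+1)/2. -/
theorem stmt_7 (A S : ℕ) (β : ℕ) (hodd : Odd β) (hβ : β ≤ 2 * A + 1)
    (hsq : (2 * (A : ℤ) + 1) ^ 2 - 8 * (S : ℤ) = (β : ℤ) ^ 2) :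
    ∃ f : ℕ, 2 * f ≤ 2 * A + 1 ∧
      (2 * (A : ℤ) + 1 - 2 * f) * f = (S : ℤ) := by
  obtain ⟨b, rfl⟩ := hodd
  have hbA : b ≤ A := by omega
  have key : 2 * (S : ℤ) = ((A : ℤ) - b) * ((A : ℤ) + b + 1) := by
    push_cast at hsq ⊢; nlinarith [hsq]
  rcases Nat.even_or_odd (A - b) with ⟨k, hk⟩ | ⟨k, hk⟩
  · refine ⟨k, by omega, ?_⟩
    have h1 : (A : ℤ) - b = 2 * k := by omega
    have h2 : (2 * (A : ℤ) + 1 - 2 * k) = (A : ℤ) + b + 1 := by omega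
    rw [h2]; nlinarith [key, h1]
  · have hev : ∃ m, A + b + 1 = 2 * m := ⟨(A + b + 1) / 2, by omega⟩
    obtain ⟨m, hm⟩ := hev
    refine ⟨m, by omega, ?_⟩
    have h1 : (A : ℤ) + b + 1 = 2 * m := by omega
    have h2 : (2 * (A : ℤ) + 1 - 2 * m) = (A : ℤ) - b := by omega
    rw [h2]; nlinarith [key, h1]
end

section
/- Let n ≥ 2, let α₁ < ... < αₙ be nonnegative integers and x₁,...,xₙ positive integers forming a score sequence of a tournament (i.e., satisfying the prefix Landau conditions with equality at n). Then there exists a natural number f with f ≤ (2αₙ+1)/2 such that (2αₙ + 1 − 2f)·f = ∑_{i=1}^{n−1}(αₙ − αᵢ)·xᵢ. -/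
/-- Theorem 2.4 of the paper: necessary Diophantine condition. -/
theorem stmt_8 (n : ℕ) (hn : 2 ≤ n) (α x : ℕ → ℕ)
    (hα : ∀ i ∈ Finset.Icc 1 n, ∀ j ∈ Finset.Icc 1 n, i < j → α i < α j)
    (hx : ∀ i ∈ Finset.Icc 1 n, 1 ≤ x i)
    (p : ℕ → ℕ) (hp : ∀ k, p k = ∑ i ∈ Finset.Icc 1 k, x i)
    (hL : ∀ k ∈ Finset.Icc 1 n,
      (∑ i ∈ Finset.Icc 1 k, α i * x i) ≥ p k * (p k - 1) / 2)
    (hEq : (∑ i ∈ Finset.Icc 1 n, α i * x i) = p n * (p n - 1) / 2) :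
    ∃ f : ℕ, 2 * f ≤ 2 * α n + 1 ∧
      (2 * (α n : ℤ) + 1 - 2 * f) * f
        = ∑ i ∈ Finset.Icc 1 (n - 1), ((α n : ℤ) - α i) * x i := by
  have hn1 : 1 ≤ n := le_trans one_le_two hn
  have hmemn : n ∈ Finset.Icc 1 n := Finset.mem_Icc.mpr ⟨hn1, le_refl n⟩
  have hmem1 : (1:ℕ) ∈ Finset.Icc 1 n := Finset.mem_Icc.mpr ⟨le_refl 1, hn1⟩
  have hP1 : 1 ≤ p n := by
    rw [hp]
    calc 1 ≤ x 1 := hx 1 hmem1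
    _ ≤ ∑ i ∈ Finset.Icc 1 n, x i :=
      Finset.single_le_sum (f := x) (fun i _ => Nat.zero_le _) hmem1
  have hαle : ∀ i ∈ Finset.Icc 1 n, α i ≤ α n := by
    intro i hi
    rcases eq_or_lt_of_le ((Finset.mem_Icc.mp hi).2) with h | h
    · exact h ▸ le_refl _
    · exact le_of_lt (hα i hi n hmemn h)
  have hTle : (∑ i ∈ Finset.Icc 1 n, α i * x i) ≤ α n * p n := by
    rw [hp, Finset.mul_sum]
    exact Finset.sum_le_sum fun i hi => Nat.mul_le_mul_right _ (hαle i hi)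
  have heven : 2 * (p n * (p n - 1) / 2) = p n * (p n - 1) := by
    have h1 : Even ((p n - 1) * (p n - 1 + 1)) := Nat.even_mul_succ_self (p n - 1)
    have h2 : p n - 1 + 1 = p n := Nat.succ_pred_eq_of_pos hP1
    rw [h2, mul_comm] at h1
    obtain ⟨k, hk⟩ := h1
    omega
  have hPle : p n ≤ 2 * α n + 1 := by
    have h1 : p n * (p n - 1) ≤ 2 * (α n * p n) := by
      rw [← heven, ← hEq]
      exact Nat.mul_le_mul_left 2 hTle
    have h2 : (p n - 1) * p n ≤ (2 * α n) * p n := by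
      calc (p n - 1) * p n = p n * (p n - 1) := mul_comm _ _
      _ ≤ 2 * (α n * p n) := h1
      _ = (2 * α n) * p n := by ring
    have := Nat.le_of_mul_le_mul_right h2 (by omega : 0 < p n)
    omega
  -- integer versions
  have hT2 : 2 * (∑ i ∈ Finset.Icc 1 n, (α i : ℤ) * x i)
      = (p n : ℤ) * ((p n : ℤ) - 1) := by
    have h1 : (2 : ℤ) * ((p n * (p n - 1) / 2 : ℕ) : ℤ) = ((p n * (p n - 1) : ℕ) : ℤ) := by
      exact_mod_cast congrArg (Nat.cast : ℕ → ℤ) heven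
    have h2 : ((p n * (p n - 1) : ℕ) : ℤ) = (p n : ℤ) * ((p n : ℤ) - 1) := by
      push_cast [Nat.cast_sub hP1]
      ring
    rw [← h2, ← h1, ← hEq]
    push_cast
    ring
  have hsplitα : (∑ i ∈ Finset.Icc 1 n, (α i : ℤ) * x i)
      = (∑ i ∈ Finset.Icc 1 (n-1), (α i : ℤ) * x i) + (α n : ℤ) * x n := by
    have h := Finset.sum_Icc_succ_top (a := 1) (b := n - 1)
      (by omega : 1 ≤ n - 1 + 1) (fun i => (α i : ℤ) * x i)
    rw [show n - 1 + 1 = n by omega] at h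
    exact h
  have hsplitx : (p n : ℤ) = (∑ i ∈ Finset.Icc 1 (n-1), (x i : ℤ)) + (x n : ℤ) := by
    have h := Finset.sum_Icc_succ_top (a := 1) (b := n - 1)
      (by omega : 1 ≤ n - 1 + 1) (fun i => (x i : ℤ))
    rw [show n - 1 + 1 = n by omega] at h
    rw [hp]
    push_cast
    exact h
  have hexp : (∑ i ∈ Finset.Icc 1 (n-1), ((α n : ℤ) - α i) * x i)
      = (α n : ℤ) * (∑ i ∈ Finset.Icc 1 (n-1), (x i : ℤ))
        - (∑ i ∈ Finset.Icc 1 (n-1), (α i : ℤ) * x i) := by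
    rw [Finset.mul_sum, ← Finset.sum_sub_distrib]
    apply Finset.sum_congr rfl
    intro i _
    ring
  have hkey : 2 * (∑ i ∈ Finset.Icc 1 (n-1), ((α n : ℤ) - α i) * x i)
      = (p n : ℤ) * (2 * (α n : ℤ) + 1 - p n) := by
    linear_combination 2 * hexp - (2 * (α n : ℤ)) * hsplitx + 2 * hsplitα - hT2
  rcases Nat.even_or_odd (p n) with he | ho
  · obtain ⟨m, hm⟩ := he
    refine ⟨p n / 2, by omega, ?_⟩
    have h2f : (2 : ℤ) * ((p n / 2 : ℕ) : ℤ) = (p n : ℤ) := by omega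
    apply mul_left_cancel₀ (two_ne_zero' ℤ)
    linear_combination -hkey + (2 * (α n : ℤ) + 1 - 2 * ((p n / 2 : ℕ) : ℤ) - (p n : ℤ)) * h2f
  · obtain ⟨m, hm⟩ := ho
    refine ⟨(2 * α n + 1 - p n) / 2, by omega, ?_⟩
    have h2f : (2 : ℤ) * (((2 * α n + 1 - p n) / 2 : ℕ) : ℤ)
        = 2 * (α n : ℤ) + 1 - (p n : ℤ) := by omega
    apply mul_left_cancel₀ (two_ne_zero' ℤ)
    linear_combination -hkey + (2 * (α n : ℤ) + 1 - 2 * (((2 * α n + 1 - p n) / 2 : ℕ) : ℤ)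
      - (2 * (α n : ℤ) + 1 - (p n : ℤ))) * h2f
end

section
/- Let n ≥ 2, let α₁ < ... < αₙ be nonnegative integers, and let x₁,...,xₙ be positive integers satisfying ∑_{i=1}^k αᵢxᵢ ≥ p_k(p_k−1)/2 for all 1 ≤ k ≤ n (where p_k = ∑_{i=1}^k xᵢ). Then for every 1 ≤ k ≤ n: p_k ≤ 2α_k + 1. -/
/-- Theorem 3.1 (first part): p_k ≤ 2α_k + 1. -/
theorem stmt_11 (n : ℕ) (hn : 2 ≤ n) (α x : ℕ → ℕ)
    (hα : ∀ i ∈ Finset.Icc 1 n, ∀ j ∈ Finset.Icc 1 n, i < j → α i < α j)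
    (hx : ∀ i ∈ Finset.Icc 1 n, 1 ≤ x i)
    (p : ℕ → ℕ) (hp : ∀ k, p k = ∑ i ∈ Finset.Icc 1 k, x i)
    (hL : ∀ k ∈ Finset.Icc 1 n,
      (∑ i ∈ Finset.Icc 1 k, α i * x i) ≥ p k * (p k - 1) / 2) :
    ∀ k ∈ Finset.Icc 1 n, p k ≤ 2 * α k + 1 := by
  intro k hk
  simp only [Finset.mem_Icc] at hk
  have hkn : k ∈ Finset.Icc 1 n := Finset.mem_Icc.mpr hk
  -- p k ≥ 1
  have hkk : k ∈ Finset.Icc 1 k := Finset.mem_Icc.mpr ⟨hk.1, le_refl k⟩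
  have hp1 : 1 ≤ p k := by
    rw [hp]
    calc 1 ≤ x k := hx k hkn
    _ ≤ ∑ i ∈ Finset.Icc 1 k, x i :=
      Finset.single_le_sum (fun i _ => Nat.zero_le _) hkk
  -- sum bound
  have hsum : (∑ i ∈ Finset.Icc 1 k, α i * x i) ≤ α k * p k := by
    rw [hp, Finset.mul_sum]
    apply Finset.sum_le_sum
    intro i hi
    simp only [Finset.mem_Icc] at hi
    have : α i ≤ α k := by
      rcases lt_or_eq_of_le hi.2 with h | h
      · exact le_of_lt (hα i (Finset.mem_Icc.mpr ⟨hi.1, hi.2.trans hk.2⟩) k hkn h)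
      · rw [h]
    exact Nat.mul_le_mul_right _ this
  have hL' := hL k hkn
  have heven : 2 ∣ p k * (p k - 1) := by
    rcases Nat.even_or_odd (p k) with h | h
    · exact Dvd.dvd.mul_right h.two_dvd _
    · exact Dvd.dvd.mul_left (Nat.Odd.sub_odd h odd_one).two_dvd _
  have h1 : p k * (p k - 1) ≤ 2 * (α k * p k) := by
    have := Nat.mul_le_mul_left 2 (le_trans hL' hsum)
    rwa [Nat.mul_div_cancel' heven] at this
  have h2 : (p k - 1) * p k ≤ (2 * α k) * p k := by
    calc (p k - 1) * p k = p k * (p k - 1) := mul_comm _ _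
    _ ≤ 2 * (α k * p k) := h1
    _ = (2 * α k) * p k := by ring
  have := Nat.le_of_mul_le_mul_right h2 (by omega : 0 < p k)
  omega
end
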